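/- Gamma-ratio stochastic representation of the GLMGA distribution: for all σ, a, b > 0, let μ be the product of the Gamma(1/2, 1) measure and the Gamma(a, 1) measure on ℝ × ℝ (gamma distributions with shape parameters 1/2 and a respectively, and unit rate). Then for every t > 0, μ{ (x, y) : (y/(2bx))^σ ≤ t } = 1 − I_{1/2,a}( t^{-1/σ}/(t^{-1/σ} + 2b) ); that is, if X ~ Gamma(1/2,1) and Y ~ Gamma(a,1) are independent, then (Y/(2bX))^σ follows the GLMGA(σ,a,b) distribution. -/

import Mathlib

open MeasureTheory Real Filter Topology

/-- The (real) beta function `B(m,n) = ∫_0^1 t^(m-1) (1-t)^(n-1) dt`. -/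
noncomputable def betaFn (m n : ℝ) : ℝ :=
  ∫ t in (0:ℝ)..1, t ^ (m - 1) * (1 - t) ^ (n - 1)

/-- The regularized incomplete beta function `I_{m,n}(v)`. -/
noncomputable def regIncBeta (m n v : ℝ) : ℝ :=
  (∫ t in (0:ℝ)..v, t ^ (m - 1) * (1 - t) ^ (n - 1)) / betaFn m n

/-- The GLMGA density `f_{σ,a,b}`. -/
noncomputable def glmga (σ a b y : ℝ) : ℝ :=
  (2 * b) ^ a / (σ * betaFn a (1 / 2)) * y ^ (-(1 / (2 * σ) + 1))
    / (y ^ (-1 / σ) + 2 * b) ^ (a + 1 / 2)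

open Set
open scoped ENNReal NNReal



lemma beta_cast_eq {m n : ℝ} (hm : 0 < m) (hn : 0 < n) :
    EqOn (fun x : ℝ => ((x ^ (m-1) * (1-x) ^ (n-1) : ℝ) : ℂ))
      (fun x : ℝ => (x:ℂ) ^ ((m:ℂ)-1) * ((1:ℂ)-x) ^ ((n:ℂ)-1)) (Icc 0 1) := by
  intro x hx
  simp only [Complex.ofReal_mul]
  rw [Complex.ofReal_cpow hx.1 (m-1), Complex.ofReal_cpow (by linarith [hx.2] : (0:ℝ) ≤ 1 - x) (n-1)]
  push_cast
  ring_nf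

lemma betaKernel_integrableOn {m n : ℝ} (hm : 0 < m) (hn : 0 < n) :
    IntegrableOn (fun u : ℝ => u ^ (m-1) * (1-u) ^ (n-1)) (Ioc 0 1) := by
  have h := Complex.betaIntegral_convergent (u := (m:ℂ)) (v := (n:ℂ))
    (by simpa using hm) (by simpa using hn)
  rw [intervalIntegrable_iff_integrableOn_Ioc_of_le zero_le_one] at h
  have hre : IntegrableOn (fun x : ℝ => ((x:ℂ) ^ ((m:ℂ)-1) * ((1:ℂ)-x) ^ ((n:ℂ)-1)).re) (Ioc 0 1) := h.re
  refine hre.congr_fun (fun x hx => ?_) measurableSet_Ioc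
  have := beta_cast_eq hm hn (x := x) ⟨hx.1.le, hx.2⟩
  simp only at this ⊢
  rw [← this]
  simp

lemma betaFn_eq_setIntegral {m n : ℝ} :
    betaFn m n = ∫ u in Ioc (0:ℝ) 1, u ^ (m-1) * (1-u) ^ (n-1) := by
  rw [betaFn, intervalIntegral.integral_of_le zero_le_one]

lemma Gamma_mul_Gamma_eq_betaFn {m n : ℝ} (hm : 0 < m) (hn : 0 < n) :
    Gamma m * Gamma n = Gamma (m + n) * betaFn m n := by
  have h := Complex.Gamma_mul_Gamma_eq_betaIntegral (s := (m:ℂ)) (t := (n:ℂ))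
    (by simpa using hm) (by simpa using hn)
  have hbeta : Complex.betaIntegral m n = (betaFn m n : ℂ) := by
    rw [Complex.betaIntegral, betaFn, ← intervalIntegral.integral_ofReal]
    refine intervalIntegral.integral_congr (fun x hx => ?_)
    rw [uIcc_of_le zero_le_one] at hx
    exact (beta_cast_eq hm hn hx).symm
  rw [hbeta, Complex.Gamma_ofReal, Complex.Gamma_ofReal, ← Complex.ofReal_add,
    Complex.Gamma_ofReal] at h
  exact_mod_cast h

lemma betaFn_pos {m n : ℝ} (hm : 0 < m) (hn : 0 < n) : 0 < betaFn m n := by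
  have h := Gamma_mul_Gamma_eq_betaFn hm hn
  have h1 : 0 < Gamma m * Gamma n := mul_pos (Gamma_pos_of_pos hm) (Gamma_pos_of_pos hn)
  have h2 : 0 < Gamma (m + n) := Gamma_pos_of_pos (by linarith)
  nlinarith

section GammaAux

noncomputable def fGam (k x : ℝ) : ℝ := x ^ (k-1) * exp (-x) / Gamma k

lemma measurable_fGam (k : ℝ) : Measurable (fGam k) :=
  ((measurable_id'.pow_const _).mul measurable_id'.neg.exp).div_const _

lemma fGam_nonneg {k x : ℝ} (hx : 0 ≤ x) (hk : 0 < k) : 0 ≤ fGam k x := by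
  unfold fGam
  have := Gamma_pos_of_pos hk
  positivity

lemma integrableOn_fGam {k : ℝ} (hk : 0 < k) : IntegrableOn (fGam k) (Ioi 0) := by
  have h : IntegrableOn (fun x => rexp (-x) * x ^ (k-1) / Gamma k) (Ioi 0) :=
    (Real.GammaIntegral_convergent hk).div_const (Gamma k)
  refine h.congr_fun (fun x _ => ?_) measurableSet_Ioi
  unfold fGam; ring

lemma gammaPDF_eq_ofReal_fGam {k x : ℝ} (hx : 0 ≤ x) :
    ProbabilityTheory.gammaPDF k 1 x = ENNReal.ofReal (fGam k x) := by
  rw [ProbabilityTheory.gammaPDF_of_nonneg hx]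
  congr 1
  rw [fGam]
  rw [Real.one_rpow]
  ring_nf

lemma gammaMeasure_Iic {k : ℝ} (hk : 0 < k) {w : ℝ} (hw : 0 ≤ w) :
    ProbabilityTheory.gammaMeasure k 1 (Iic w)
      = ENNReal.ofReal (∫ y in Ioc (0:ℝ) w, fGam k y) := by
  rw [ProbabilityTheory.gammaMeasure, withDensity_apply _ measurableSet_Iic,
    lintegral_Iic_eq_lintegral_Iio_add_Icc _ hw,
    ProbabilityTheory.lintegral_gammaPDF_of_nonpos le_rfl, zero_add,
    ← Measure.restrict_congr_set Ioc_ae_eq_Icc]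
  have hint : IntegrableOn (fGam k) (Ioc 0 w) :=
    (integrableOn_fGam hk).mono_set Ioc_subset_Ioi_self
  rw [setLIntegral_congr_fun measurableSet_Ioc
    (fun y (hy : y ∈ Ioc (0:ℝ) w) => gammaPDF_eq_ofReal_fGam hy.1.le)]
  exact (ofReal_integral_eq_lintegral_ofReal hint
    (ae_restrict_of_forall_mem measurableSet_Ioc fun y hy => fGam_nonneg hy.1.le hk)).symm

lemma integral_Ioc_fGam_scale {k w : ℝ} (hw : 0 < w) (hk : 0 < k) :
    ∫ y in Ioc (0:ℝ) w, fGam k y = ∫ u in Ioc (0:ℝ) 1, w * fGam k (w * u) := by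
  rw [← intervalIntegral.integral_of_le hw.le, ← intervalIntegral.integral_of_le zero_le_one]
  have := intervalIntegral.smul_integral_comp_mul_left (a := (0:ℝ)) (b := 1) (fGam k) w
  rw [mul_zero, mul_one] at this
  rw [← this, intervalIntegral.integral_const_mul, smul_eq_mul]

lemma integrableOn_fGam_scale {k w : ℝ} (hw : 0 < w) (hk : 0 < k) :
    IntegrableOn (fun u : ℝ => w * fGam k (w * u)) (Ioc 0 1) := by
  have h1 : IntervalIntegrable (fGam k) volume 0 w :=
    (intervalIntegrable_iff_integrableOn_Ioc_of_le hw.le).mpr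
      ((integrableOn_fGam hk).mono_set Ioc_subset_Ioi_self)
  have h2 := h1.comp_mul_left (c := w)
  rw [zero_div, div_self hw.ne'] at h2
  rw [intervalIntegrable_iff_integrableOn_Ioc_of_le zero_le_one] at h2
  exact h2.const_mul w

end GammaAux


lemma point_eq {a c w x : ℝ} (hc : 0 < c) (hw : 0 < w) (hx : 0 < x) :
    fGam (1/2) x * ((c*x) * fGam a ((c*x)*w))
      = (c ^ a * w ^ (a-1) / (Gamma (1/2) * Gamma a))
        * (x ^ ((a + 1/2) - 1) * exp (-((1 + c*w) * x))) := by
  unfold fGam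
  rw [show (c*x)*w = (c*w)*x by ring, Real.mul_rpow (by positivity) hx.le,
    Real.mul_rpow hc.le hw.le,
    show c ^ a = c ^ (a-1) * c by
      nth_rewrite 1 [show a = (a-1)+1 by ring]
      rw [Real.rpow_add_one hc.ne'],
    show x ^ (a + 1/2 - 1) = x ^ ((1:ℝ)/2 - 1) * x ^ (a-1) * x by
      rw [mul_assoc, ← Real.rpow_add_one hx.ne', ← Real.rpow_add hx]
      congr 1; ring,
    show exp (-((1 + c*w) * x)) = exp (-x) * exp (-((c*w)*x)) by
      rw [← Real.exp_add]; congr 1; ring]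
  ring

lemma integrableOn_rpow_exp {s r : ℝ} (hs : 0 < s) (hr : 0 < r) :
    IntegrableOn (fun x : ℝ => x ^ (s-1) * exp (-(r*x))) (Ioi 0) := by
  have h : IntegrableOn (fun x : ℝ => x ^ (s-1) * exp (-r * x ^ (1:ℝ))) (Ioi 0) :=
    integrableOn_rpow_mul_exp_neg_mul_rpow (by linarith) one_pos hr
  refine h.congr_fun (fun x _ => ?_) measurableSet_Ioi
  simp only [Real.rpow_one, neg_mul]

lemma inner_x_integral {a c w : ℝ} (ha : 0 < a) (hc : 0 < c) (hw : 0 < w) :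
    ∫ x in Ioi (0:ℝ), fGam (1/2) x * ((c*x) * fGam a ((c*x)*w))
      = (c ^ a * w ^ (a-1) / (Gamma (1/2) * Gamma a))
        * ((1/(1+c*w)) ^ (a + 1/2) * Gamma (a + 1/2)) := by
  rw [setIntegral_congr_fun measurableSet_Ioi
    (fun x hx => point_eq hc hw (mem_Ioi.mp hx)), integral_const_mul,
    integral_rpow_mul_exp_neg_mul_Ioi (by positivity) (by positivity)]

lemma integrableOn_inner_x {a c w : ℝ} (ha : 0 < a) (hc : 0 < c) (hw : 0 < w) :
    IntegrableOn (fun x : ℝ => fGam (1/2) x * ((c*x) * fGam a ((c*x)*w))) (Ioi 0) := by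
  have h : IntegrableOn (fun x : ℝ => (c ^ a * w ^ (a-1) / (Gamma (1/2) * Gamma a))
      * (x ^ ((a + 1/2) - 1) * exp (-((1 + c*w) * x)))) (Ioi 0) := ((integrableOn_rpow_exp (s := a + 1/2) (r := 1 + c*w) (by positivity)
    (by positivity)).const_mul (c ^ a * w ^ (a-1) / (Gamma (1/2) * Gamma a)))
  refine h.congr_fun (fun x hx => (point_eq hc hw (mem_Ioi.mp hx)).symm) measurableSet_Ioi

lemma image_inv_map {c : ℝ} (hc : 0 < c) :
    (fun w : ℝ => (1 + c*w)⁻¹) '' (Ioo 0 1) = Ioo ((1+c)⁻¹) 1 := by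
  ext u
  constructor
  · rintro ⟨w, ⟨hw0, hw1⟩, rfl⟩
    have h1 : (1:ℝ) < 1 + c*w := by nlinarith
    have h2 : 1 + c*w < 1 + c := by nlinarith
    exact ⟨by rw [inv_lt_inv₀ (by linarith) (by linarith)]; exact h2,
      by rw [inv_lt_one_iff₀]; right; exact h1⟩
  · rintro ⟨hu1, hu2⟩
    have hu0 : 0 < u := lt_trans (by positivity) hu1
    refine ⟨(u⁻¹ - 1)/c, ⟨?_, ?_⟩, ?_⟩
    · have : 1 < u⁻¹ := (one_lt_inv₀ hu0).mpr hu2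
      have := sub_pos.mpr this
      positivity
    · rw [div_lt_one hc, sub_lt_iff_lt_add]
      have h3 : u⁻¹ < ((1+c)⁻¹)⁻¹ := by
        rw [inv_lt_inv₀ hu0 (by positivity)]
        exact hu1
      rwa [inv_inv, add_comm] at h3
    · have h4 : 1 + c * ((u⁻¹-1)/c) = u⁻¹ := by field_simp; ring
      simp only [h4, inv_inv]

lemma subst_lemma {a c : ℝ} (ha : 0 < a) (hc : 0 < c) :
    ∫ u in Ioo ((1+c)⁻¹) 1, u ^ ((1:ℝ)/2 - 1) * (1-u) ^ (a-1)
      = ∫ w in Ioo (0:ℝ) 1, c ^ a * w ^ (a-1) * (1/(1+c*w)) ^ (a + 1/2) := by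
  have hderiv : ∀ w ∈ Ioo (0:ℝ) 1, HasDerivWithinAt (fun w : ℝ => (1 + c*w)⁻¹)
      (-(c) / (1 + c*w)^2) (Ioo 0 1) w := by
    intro w hw
    have h : HasDerivAt (fun w : ℝ => 1 + c*w) c w := by
      simpa using ((hasDerivAt_id w).const_mul c).const_add 1
    exact (h.inv (by nlinarith [hw.1])).hasDerivWithinAt
  have hinj : InjOn (fun w : ℝ => (1 + c*w)⁻¹) (Ioo 0 1) := by
    intro w1 h1 w2 h2 he
    simp only at he
    have : 1 + c*w1 = 1 + c*w2 :=
      inv_injective he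
    exact mul_left_cancel₀ hc.ne' (by linarith)
  rw [← image_inv_map hc, integral_image_eq_integral_abs_deriv_smul measurableSet_Ioo hderiv hinj]
  refine setIntegral_congr_fun measurableSet_Ioo fun w hw => ?_
  obtain ⟨hw0, hw1⟩ := hw
  have hs : (0:ℝ) < 1 + c*w := by nlinarith
  rw [smul_eq_mul, abs_div, abs_neg, abs_of_pos hc, abs_of_pos (by positivity : (0:ℝ) < (1+c*w)^2)]
  rw [Real.inv_rpow hs.le, ← Real.rpow_neg hs.le, show -((1:ℝ)/2 - 1) = (1:ℝ)/2 by norm_num]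
  rw [show 1 - (1 + c*w)⁻¹ = (c*w) * (1+c*w)⁻¹ by field_simp; ring]
  rw [Real.mul_rpow (by positivity) (by positivity), Real.mul_rpow hc.le hw0.le,
    Real.inv_rpow hs.le, ← Real.rpow_neg hs.le]
  rw [one_div (1+c*w), Real.inv_rpow hs.le, ← Real.rpow_neg hs.le]
  rw [show ((1+c*w)^2 : ℝ) = (1+c*w) ^ (2:ℝ) by rw [Real.rpow_two], show c ^ a = c * c ^ (a-1) by
    nth_rewrite 1 [show a = 1+(a-1) by ring]
    rw [Real.rpow_add hc, Real.rpow_one]]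
  have key : (1+c*w) ^ ((1:ℝ)/2) * (1+c*w) ^ (-(a-1)) / (1+c*w) ^ (2:ℝ)
      = (1+c*w) ^ (-(a+1/2)) := by
    rw [← Real.rpow_add hs, ← Real.rpow_sub hs]
    congr 1
    ring
  linear_combination (c * c ^ (a-1) * w ^ (a-1)) * key


lemma integrableOn_val {a c : ℝ} (ha : 0 < a) (hc : 0 < c) :
    IntegrableOn (fun w : ℝ => (c ^ a * w ^ (a-1) / (Gamma (1/2) * Gamma a))
      * ((1/(1+c*w)) ^ (a + 1/2) * Gamma (a + 1/2))) (Ioc 0 1) := by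
  have h1 : IntervalIntegrable (fun w : ℝ => w ^ (a-1)) volume 0 1 :=
    intervalIntegral.intervalIntegrable_rpow' (by linarith)
  have hcont : ContinuousOn (fun w : ℝ => (1/(1+c*w)) ^ (a + 1/2)
      * (Gamma (a + 1/2) * (c ^ a / (Gamma (1/2) * Gamma a)))) (uIcc 0 1) := by
    apply ContinuousOn.mul ?_ continuousOn_const
    apply ContinuousOn.rpow_const
    · refine ContinuousOn.div continuousOn_const
        ((continuous_const.add (continuous_const.mul continuous_id)).continuousOn) (fun w hw => ?_)
      rw [uIcc_of_le zero_le_one] at hw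
      have := hw.1
      positivity
    · intro w _
      right; positivity
  have h2 := (h1.mul_continuousOn hcont)
  rw [intervalIntegrable_iff_integrableOn_Ioc_of_le zero_le_one] at h2
  refine h2.congr_fun (fun w _ => ?_) measurableSet_Ioc
  ring

lemma real_core {a c : ℝ} (ha : 0 < a) (hc : 0 < c) :
    ∫ w in Ioc (0:ℝ) 1, (c ^ a * w ^ (a-1) / (Gamma (1/2) * Gamma a))
      * ((1/(1+c*w)) ^ (a + 1/2) * Gamma (a + 1/2))
    = 1 - regIncBeta (1/2) a ((1+c)⁻¹) := by
  have hv0 : (0:ℝ) < (1+c)⁻¹ := by positivity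
  have hv1 : (1+c)⁻¹ < 1 := by
    rw [inv_lt_one_iff₀]; right; linarith
  have hB := betaFn_pos (by norm_num : (0:ℝ) < 1/2) ha
  have hG := Gamma_mul_Gamma_eq_betaFn (by norm_num : (0:ℝ) < 1/2) ha
  have hGpos : 0 < Gamma ((1:ℝ)/2 + a) := Gamma_pos_of_pos (by linarith)
  have h1 : ∀ w : ℝ, (c ^ a * w ^ (a-1) / (Gamma (1/2) * Gamma a))
      * ((1/(1+c*w)) ^ (a + 1/2) * Gamma (a + 1/2))
      = (Gamma (a+1/2) / (Gamma (1/2) * Gamma a))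
        * (c ^ a * w ^ (a-1) * (1/(1+c*w)) ^ (a + 1/2)) := fun w => by ring
  simp_rw [h1]
  rw [integral_const_mul, ← Measure.restrict_congr_set Ioo_ae_eq_Ioc, ← subst_lemma ha hc,
    Measure.restrict_congr_set Ioo_ae_eq_Ioc]
  have hint1 : IntegrableOn (fun u : ℝ => u ^ ((1:ℝ)/2-1) * (1-u) ^ (a-1))
      (Ioc 0 ((1+c)⁻¹)) :=
    (betaKernel_integrableOn (by norm_num) ha).mono_set
      (Ioc_subset_Ioc_right hv1.le)
  have hint2 : IntegrableOn (fun u : ℝ => u ^ ((1:ℝ)/2-1) * (1-u) ^ (a-1))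
      (Ioc ((1+c)⁻¹) 1) :=
    (betaKernel_integrableOn (by norm_num) ha).mono_set
      (Ioc_subset_Ioc_left hv0.le)
  have hsplit : (∫ u in Ioc (0:ℝ) ((1+c)⁻¹), u ^ ((1:ℝ)/2-1) * (1-u) ^ (a-1))
      + (∫ u in Ioc ((1+c)⁻¹) 1, u ^ ((1:ℝ)/2-1) * (1-u) ^ (a-1))
      = betaFn (1/2) a := by
    rw [betaFn_eq_setIntegral, ← Ioc_union_Ioc_eq_Ioc hv0.le hv1.le,
      setIntegral_union (Ioc_disjoint_Ioc_of_le le_rfl) measurableSet_Ioc hint1 hint2]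
  rw [regIncBeta, intervalIntegral.integral_of_le hv0.le]
  rw [show Gamma (a + 1/2) = Gamma ((1:ℝ)/2 + a) by ring_nf]
  rw [hG, div_mul_cancel_left₀ hGpos.ne', eq_sub_of_add_eq' hsplit, mul_sub,
    inv_mul_cancel₀ hB.ne', inv_mul_eq_div]

/-- gamma-ratio stochastic representation of the GLMGA distribution. -/
theorem glmga_gamma_ratio_representation (σ a b : ℝ) (hσ : 0 < σ) (ha : 0 < a)
    (hb : 0 < b) (t : ℝ) (ht : 0 < t) :
    ((ProbabilityTheory.gammaMeasure (1 / 2) 1).prod (ProbabilityTheory.gammaMeasure a 1))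
        {p : ℝ × ℝ | (p.2 / (2 * b * p.1)) ^ σ ≤ t}
      = ENNReal.ofReal
          (1 - regIncBeta (1 / 2) a (t ^ (-1 / σ) / (t ^ (-1 / σ) + 2 * b))) := by
  haveI : IsProbabilityMeasure (ProbabilityTheory.gammaMeasure a 1) :=
    ProbabilityTheory.isProbabilityMeasure_gammaMeasure ha one_pos
  haveI : IsProbabilityMeasure (ProbabilityTheory.gammaMeasure (1/2 : ℝ) 1) :=
    ProbabilityTheory.isProbabilityMeasure_gammaMeasure (by norm_num) one_pos
  have hp : (0:ℝ) < t ^ σ⁻¹ := Real.rpow_pos_of_pos ht _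
  set c : ℝ := 2 * b * t ^ σ⁻¹ with hc_def
  have hc : 0 < c := by positivity
  have harg : t ^ (-1 / σ) / (t ^ (-1 / σ) + 2 * b) = (1 + c)⁻¹ := by
    have h1 : t ^ (-1/σ) = (t ^ σ⁻¹)⁻¹ := by
      rw [show (-1/σ) = -σ⁻¹ by rw [neg_div, one_div], Real.rpow_neg ht.le]
    rw [h1, hc_def]
    rw [div_eq_inv_mul, ← mul_inv, inv_inj]
    field_simp
  rw [harg, ← real_core ha hc]
  -- measurability facts
  have hSm : MeasurableSet {p : ℝ × ℝ | (p.2 / (2 * b * p.1)) ^ σ ≤ t} := by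
    apply measurableSet_le _ measurable_const
    exact (measurable_snd.div (measurable_fst.const_mul (2*b))).pow_const σ
  have hpdfm : Measurable (ProbabilityTheory.gammaPDF (1/2) 1) :=
    (ProbabilityTheory.measurable_gammaPDFReal _ _).ennreal_ofReal
  have hFm : Measurable fun x : ℝ => ProbabilityTheory.gammaMeasure a 1
      (Prod.mk x ⁻¹' {p : ℝ × ℝ | (p.2 / (2 * b * p.1)) ^ σ ≤ t}) :=
    measurable_measure_prodMk_left hSm
  -- pdf vanishes on nonpositive reals
  have hg0 : ∀ x : ℝ, x ≤ 0 → ProbabilityTheory.gammaPDF (1/2) 1 x = 0 := by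
    intro x hx
    rcases hx.lt_or_eq with h | h
    · exact ProbabilityTheory.gammaPDF_of_neg h
    · subst h
      simp [ProbabilityTheory.gammaPDF_eq, ProbabilityTheory.gammaPDFReal,
        Real.zero_rpow (show (1/2 - 1 : ℝ) ≠ 0 by norm_num),
        Real.zero_rpow (show (2⁻¹ - 1 : ℝ) ≠ 0 by norm_num)]
  -- the section measure
  have hsec : ∀ x : ℝ, 0 < x →
      ProbabilityTheory.gammaMeasure a 1
          (Prod.mk x ⁻¹' {p : ℝ × ℝ | (p.2 / (2 * b * p.1)) ^ σ ≤ t})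
        = ProbabilityTheory.gammaMeasure a 1 (Iic (c*x)) := by
    intro x hx
    have hnull : ProbabilityTheory.gammaMeasure a 1 (Iio 0) = 0 := by
      rw [ProbabilityTheory.gammaMeasure, withDensity_apply _ measurableSet_Iio]
      exact ProbabilityTheory.lintegral_gammaPDF_of_nonpos le_rfl
    apply measure_congr
    rw [Filter.eventuallyEq_set]
    have hae : ∀ᵐ y ∂(ProbabilityTheory.gammaMeasure a 1), 0 ≤ y := by
      rw [ae_iff]
      refine measure_mono_null (fun y hy => ?_) hnull
      simpa using not_le.mp hy
    filter_upwards [hae] with y hy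
    simp only [mem_preimage, mem_setOf_eq, mem_Iic]
    have h2bx : (0:ℝ) < 2*b*x := by positivity
    have hiff : (y / (2*b*x)) ^ σ ≤ t ↔ y / (2*b*x) ≤ t ^ σ⁻¹ :=
      (Real.le_rpow_inv_iff_of_pos (by positivity) ht.le hσ).symm
    rw [hiff, div_le_iff₀ h2bx, show t ^ σ⁻¹ * (2*b*x) = c*x by rw [hc_def]; ring]
  -- main computation
  rw [Measure.prod_apply hSm]
  rw [show ProbabilityTheory.gammaMeasure (1/2) 1
      = volume.withDensity (ProbabilityTheory.gammaPDF (1/2) 1) from rfl]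
  rw [lintegral_withDensity_eq_lintegral_mul _ hpdfm hFm]
  rw [← lintegral_add_compl _ (measurableSet_Ioi (a := (0:ℝ)))]
  have hzero : ∫⁻ x in (Ioi (0:ℝ))ᶜ,
      (ProbabilityTheory.gammaPDF (1/2) 1 * fun x => ProbabilityTheory.gammaMeasure a 1
        (Prod.mk x ⁻¹' {p : ℝ × ℝ | (p.2 / (2 * b * p.1)) ^ σ ≤ t})) x = 0 := by
    rw [compl_Ioi]
    rw [setLIntegral_congr_fun (g := fun _ => (0:ℝ≥0∞)) measurableSet_Iic
      (fun x (hx : x ≤ 0) => by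
        simp only [Pi.mul_apply, hg0 x hx, zero_mul])]
    exact lintegral_zero
  rw [hzero, add_zero]
  have hstep3 : ∫⁻ x in Ioi (0:ℝ),
      (ProbabilityTheory.gammaPDF (1/2) 1 * fun x => ProbabilityTheory.gammaMeasure a 1
        (Prod.mk x ⁻¹' {p : ℝ × ℝ | (p.2 / (2 * b * p.1)) ^ σ ≤ t})) x
      = ∫⁻ x in Ioi (0:ℝ), ∫⁻ u in Ioc (0:ℝ) 1,
          ENNReal.ofReal (fGam (1/2) x * ((c*x) * fGam a ((c*x)*u))) := by
    refine setLIntegral_congr_fun measurableSet_Ioi (fun x hx => ?_)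
    have hx : (0:ℝ) < x := hx
    have hcx : (0:ℝ) < c*x := by positivity
    simp only [Pi.mul_apply]
    rw [hsec x hx, gammaMeasure_Iic ha hcx.le, integral_Ioc_fGam_scale hcx ha,
      ofReal_integral_eq_lintegral_ofReal (integrableOn_fGam_scale hcx ha)
        (ae_restrict_of_forall_mem measurableSet_Ioc (fun u hu => by
          have h2 := fGam_nonneg (mul_nonneg hcx.le hu.1.le) ha
          exact mul_nonneg hcx.le h2)),
      gammaPDF_eq_ofReal_fGam hx.le]
    have hmeas1 : Measurable fun u : ℝ => ENNReal.ofReal ((c*x) * fGam a ((c*x)*u)) :=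
      (((measurable_fGam a).comp (measurable_id.const_mul (c*x))).const_mul (c*x)).ennreal_ofReal
    rw [← lintegral_const_mul _ hmeas1]
    refine setLIntegral_congr_fun measurableSet_Ioc (fun u hu => ?_)
    rw [← ENNReal.ofReal_mul (fGam_nonneg hx.le (by norm_num))]
  rw [hstep3]
  have hmeas2 : Measurable (Function.uncurry fun x u : ℝ =>
      ENNReal.ofReal (fGam (1/2) x * ((c*x) * fGam a ((c*x)*u)))) := by
    apply Measurable.ennreal_ofReal
    exact (((measurable_fGam (1/2)).comp measurable_fst).mul
      ((measurable_fst.const_mul c).mul ((measurable_fGam a).comp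
        ((measurable_fst.const_mul c).mul measurable_snd))))
  rw [lintegral_lintegral_swap hmeas2.aemeasurable]
  have hstep5 : ∀ᵐ u ∂(volume.restrict (Ioc (0:ℝ) 1)), (∫⁻ x in Ioi (0:ℝ),
        ENNReal.ofReal (fGam (1/2) x * ((c*x) * fGam a ((c*x)*u))))
      = ENNReal.ofReal ((c ^ a * u ^ (a-1) / (Gamma (1/2) * Gamma a))
          * ((1/(1+c*u)) ^ (a + 1/2) * Gamma (a + 1/2))) := by
    refine ae_restrict_of_forall_mem measurableSet_Ioc (fun u hu => ?_)
    rw [← ofReal_integral_eq_lintegral_ofReal (integrableOn_inner_x ha hc hu.1)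
        (ae_restrict_of_forall_mem measurableSet_Ioi (fun x hx => by
          have hx' : (0:ℝ) < x := hx
          have harg0 : (0:ℝ) ≤ (c*x)*u := mul_nonneg (mul_nonneg hc.le hx'.le) hu.1.le
          exact mul_nonneg (fGam_nonneg hx'.le (by norm_num))
            (mul_nonneg (mul_nonneg hc.le hx'.le) (fGam_nonneg harg0 ha)))),
      inner_x_integral ha hc hu.1]
  rw [lintegral_congr_ae hstep5]
  rw [← ofReal_integral_eq_lintegral_ofReal (integrableOn_val ha hc)
    (ae_restrict_of_forall_mem measurableSet_Ioc (fun u hu => ?_))]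
  have hu0 : (0:ℝ) < u := hu.1
  have hG2 : (0:ℝ) < Gamma (1/2) := Gamma_pos_of_pos (by norm_num)
  have hGa : (0:ℝ) < Gamma a := Gamma_pos_of_pos ha
  have hGa2 : (0:ℝ) < Gamma (a + 1/2) := Gamma_pos_of_pos (by linarith)
  have h1 : (0:ℝ) ≤ u ^ (a-1) := Real.rpow_nonneg hu0.le _
  have h2 : (0:ℝ) ≤ (1/(1+c*u)) ^ (a+1/2) := Real.rpow_nonneg (by positivity) _
  positivity
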